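/- Let T ∈ L(H,K), S a closed subspace of H, A = T*T, and suppose (A,S) is compatible. Then for y ∈ H \ S, spl(T,S,y) = {(I − Q)y : Q ∈ P(A,S)}, and (I − P_{A,S})y is the unique vector of minimal norm in spl(T,S,y). -/

import Mathlib

/-! A vector `x ∈ y + S` lies in `spl(T,S,y)` iff `T x ⊥ T(S)`, i.e. `A x ⊥ S`. Every `y - Q y`
with `Q ∈ P(A,S)` satisfies this, and two splines differ by an element of `N(A) ∩ S`. Conversely,
for a spline `x` and any `P ∈ P(A,S)`, the vector `n := (y - P y) - x` lies in `N(A) ∩ S`, so the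
rank-one perturbation `P + φ ⊗ n`, with `φ` a functional killing `S` and `φ y = 1`, is again in
`P(A,S)` and sends `y` to `y - x`. Finally `y - P_{A,S} y ∈ N(P_{A,S}) ⊥ N(A) ∩ S`, so by
Pythagoras it is the unique spline of minimal norm. -/

open ContinuousLinearMap
open scoped InnerProductSpace

/-- `P(A,S)`: the set of `A`-Hermitian bounded projections with range `S`. -/
def PAS {H : Type*} [NormedAddCommGroup H] [InnerProductSpace ℂ H] [CompleteSpace H]
    (A : H →L[ℂ] H) (S : Submodule ℂ H) : Set (H →L[ℂ] H) :=
  {Q | Q ∘L Q = Q ∧ LinearMap.range (Q : H →ₗ[ℂ] H) = S ∧ A ∘L Q = adjoint Q ∘L A}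

def spl {𝕜 E F : Type*} [NormedField 𝕜] [NormedAddCommGroup E] [NormedSpace 𝕜 E]
    [NormedAddCommGroup F] [NormedSpace 𝕜 F] (T : E →L[𝕜] F) (S : Submodule 𝕜 E) (y : E) :
    Set E :=
  {x | (∃ s ∈ S, x = y + s) ∧ ∀ s ∈ S, ‖T x‖ ≤ ‖T (y + s)‖}

section Spline

variable {𝕜 E F : Type*} [RCLike 𝕜] [NormedAddCommGroup E] [InnerProductSpace 𝕜 E]
  [NormedAddCommGroup F] [InnerProductSpace 𝕜 F]

theorem Submodule.norm_le_norm_add_iff_inner_eq_zero (K : Submodule 𝕜 F) (u : F) :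
    (∀ w ∈ K, ‖u‖ ≤ ‖u + w‖) ↔ ∀ w ∈ K, ⟪u, w⟫_𝕜 = 0 := by
  have hbdd : BddBelow (Set.range fun w : K ↦ ‖u - w‖) := ⟨0, by rintro _ ⟨w, rfl⟩; positivity⟩
  have hinf := K.norm_eq_iInf_iff_inner_eq_zero (u := u) K.zero_mem
  simp only [sub_zero] at hinf
  rw [← hinf]
  constructor
  · intro h
    refine le_antisymm (le_ciInf fun w ↦ ?_) (by simpa using ciInf_le hbdd 0)
    simpa [sub_eq_add_neg] using h (-w) (K.neg_mem w.2)
  · intro h w hw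
    rw [h]
    simpa [sub_eq_add_neg] using ciInf_le hbdd ⟨-w, K.neg_mem hw⟩

variable {T : E →L[𝕜] F} {S : Submodule 𝕜 E} {x y : E}

theorem mem_spl_iff : x ∈ spl T S y ↔ x - y ∈ S ∧ ∀ u ∈ S, ⟪T x, T u⟫_𝕜 = 0 := by
  have hmem : (∃ s ∈ S, x = y + s) ↔ x - y ∈ S :=
    ⟨fun ⟨s, hs, hx⟩ ↦ by simpa [hx] using hs, fun h ↦ ⟨x - y, h, by abel⟩⟩
  rw [spl, Set.mem_ofPred_eq, hmem, and_congr_right_iff]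
  intro hxy
  have hshift : (∀ s ∈ S, ‖T x‖ ≤ ‖T (y + s)‖) ↔ ∀ u ∈ S, ‖T x‖ ≤ ‖T x + T u‖ := by
    refine ⟨fun h u hu ↦ ?_, fun h s hs ↦ ?_⟩
    · have e : y + (x - y + u) = x + u := by abel
      simpa only [e, map_add] using h _ (S.add_mem hxy hu)
    · have e : x + (s - (x - y)) = y + s := by abel
      simpa only [← map_add, e] using h _ (S.sub_mem hs hxy)
  have key := (S.map (T : E →ₗ[𝕜] F)).norm_le_norm_add_iff_inner_eq_zero (T x)
  simp only [Submodule.mem_map, forall_exists_index, and_imp, forall_apply_eq_imp_iff₂,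
    ContinuousLinearMap.coe_coe] at key
  rw [hshift, key]

theorem sub_mem_ker_inf_of_mem_spl {x₁ x₂ : E} (hx₁ : x₁ ∈ spl T S y) (hx₂ : x₂ ∈ spl T S y) :
    x₁ - x₂ ∈ LinearMap.ker (T : E →ₗ[𝕜] F) ⊓ S := by
  obtain ⟨hy₁, horth₁⟩ := mem_spl_iff.1 hx₁
  obtain ⟨hy₂, horth₂⟩ := mem_spl_iff.1 hx₂
  have hS : x₁ - x₂ ∈ S := by simpa using S.sub_mem hy₁ hy₂
  refine Submodule.mem_inf.2 ⟨?_, hS⟩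
  change T (x₁ - x₂) = 0
  rw [← inner_self_eq_zero (𝕜 := 𝕜)]
  nth_rewrite 1 [map_sub]
  rw [inner_sub_left, horth₁ _ hS, horth₂ _ hS, sub_zero]

theorem norm_sq_eq_of_mem_spl {x₀ : E} (hx₀ : x₀ ∈ spl T S y)
    (horth : x₀ ∈ (LinearMap.ker (T : E →ₗ[𝕜] F) ⊓ S)ᗮ) (hx : x ∈ spl T S y) :
    ‖x‖ ^ 2 = ‖x₀‖ ^ 2 + ‖x - x₀‖ ^ 2 := by
  have h : ⟪x₀, x - x₀⟫_𝕜 = 0 :=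
    Submodule.inner_left_of_mem_orthogonal (sub_mem_ker_inf_of_mem_spl hx hx₀) horth
  simpa [sq] using norm_add_sq_eq_norm_sq_add_norm_sq_of_inner_eq_zero x₀ (x - x₀) h

theorem norm_le_of_mem_spl {x₀ : E} (hx₀ : x₀ ∈ spl T S y)
    (horth : x₀ ∈ (LinearMap.ker (T : E →ₗ[𝕜] F) ⊓ S)ᗮ) (hx : x ∈ spl T S y) : ‖x₀‖ ≤ ‖x‖ := by
  have := norm_sq_eq_of_mem_spl hx₀ horth hx
  nlinarith [norm_nonneg x, norm_nonneg x₀, sq_nonneg ‖x - x₀‖]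

theorem eq_of_mem_spl_of_norm_eq {x₀ : E} (hx₀ : x₀ ∈ spl T S y)
    (horth : x₀ ∈ (LinearMap.ker (T : E →ₗ[𝕜] F) ⊓ S)ᗮ) (hx : x ∈ spl T S y)
    (hnorm : ‖x‖ = ‖x₀‖) : x = x₀ := by
  have := norm_sq_eq_of_mem_spl hx₀ horth hx
  rw [hnorm, left_eq_add, sq_eq_zero_iff, norm_eq_zero, sub_eq_zero] at this
  exact this

end Spline

theorem exists_dual_eq_one_vanishing_on_ker {𝕜 E : Type*} [RCLike 𝕜] [NormedAddCommGroup E]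
    [InnerProductSpace 𝕜 E] (R : E →L[𝕜] E) {y : E} (hy : R y ≠ 0) :
    ∃ φ : E →L[𝕜] 𝕜, φ y = 1 ∧ ∀ z, R z = 0 → φ z = 0 := by
  refine ⟨(⟪R y, R y⟫_𝕜)⁻¹ • (innerSL 𝕜 (R y) ∘L R), ?_, fun z hz ↦ by simp [hz]⟩
  simp [hy]

section Projections

variable {H K : Type*} [NormedAddCommGroup H] [InnerProductSpace ℂ H] [CompleteSpace H]
  [NormedAddCommGroup K] [InnerProductSpace ℂ K] [CompleteSpace K]
  {A P Q : H →L[ℂ] H} {S : Submodule ℂ H}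

theorem apply_mem_of_mem_PAS (hQ : Q ∈ PAS A S) (h : H) : Q h ∈ S :=
  hQ.2.1 ▸ LinearMap.mem_range_self (Q : H →ₗ[ℂ] H) h

theorem apply_eq_self_of_mem_PAS (hQ : Q ∈ PAS A S) {u : H} (hu : u ∈ S) : Q u = u := by
  obtain ⟨v, rfl⟩ := hQ.2.1 ▸ hu
  exact DFunLike.congr_fun hQ.1 v

theorem sub_apply_mem_spl_of_mem_PAS {T : H →L[ℂ] K} (hQ : Q ∈ PAS (adjoint T ∘L T) S)
    (y : H) : y - Q y ∈ spl T S y := by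
  refine mem_spl_iff.2 ⟨by simpa using S.neg_mem (apply_mem_of_mem_PAS hQ y), fun u hu ↦ ?_⟩
  have hherm : adjoint T (T (Q y)) = adjoint Q (adjoint T (T y)) := DFunLike.congr_fun hQ.2.2 y
  rw [← adjoint_inner_left, map_sub, map_sub, hherm, inner_sub_left, adjoint_inner_left Q,
    apply_eq_self_of_mem_PAS hQ hu, sub_self]

theorem add_smulRight_mem_PAS (hA : IsSelfAdjoint A) (hQ : Q ∈ PAS A S) {n : H}
    (hn : n ∈ LinearMap.ker (A : H →ₗ[ℂ] H) ⊓ S) {φ : H →L[ℂ] ℂ} (hφ : ∀ s ∈ S, φ s = 0) :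
    Q + φ.smulRight n ∈ PAS A S := by
  obtain ⟨hAn, hnS⟩ : A n = 0 ∧ n ∈ S := Submodule.mem_inf.1 hn
  have happ : ∀ h, (Q + φ.smulRight n) h = Q h + φ h • n := fun h ↦ rfl
  refine ⟨?_, ?_, ?_⟩
  · ext h
    have hQQ : Q (Q h) = Q h := DFunLike.congr_fun hQ.1 h
    rw [comp_apply, happ, happ, map_add, map_smul, apply_eq_self_of_mem_PAS hQ hnS, hQQ,
      map_add, map_smul, hφ _ (apply_mem_of_mem_PAS hQ h), hφ n hnS]
    simp
  · refine le_antisymm ?_ fun u hu ↦ ⟨u, ?_⟩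
    · rintro _ ⟨h, rfl⟩
      exact S.add_mem (apply_mem_of_mem_PAS hQ h) (S.smul_mem _ hnS)
    · change (Q + φ.smulRight n) u = u
      rw [happ, apply_eq_self_of_mem_PAS hQ hu, hφ u hu, zero_smul, add_zero]
  · ext h
    refine ext_inner_left ℂ fun v ↦ ?_
    have hnA : ⟪n, A h⟫_ℂ = 0 := by simpa [hAn] using (hA.isSymmetric n h).symm
    rw [comp_apply, comp_apply, adjoint_inner_right, happ, happ, map_add, map_smul, hAn,
      smul_zero, add_zero, inner_add_left, inner_smul_left, hnA, mul_zero, add_zero,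
      ← adjoint_inner_right, ← comp_apply, hQ.2.2, comp_apply]

theorem spl_eq_setOf_PAS {T : H →L[ℂ] K} (hP : P ∈ PAS (adjoint T ∘L T) S) {y : H}
    (hy : y ∉ S) : spl T S y = {x | ∃ Q ∈ PAS (adjoint T ∘L T) S, x = y - Q y} := by
  ext x
  refine ⟨fun hx ↦ ?_, fun ⟨Q, hQ, hxQ⟩ ↦ hxQ ▸ sub_apply_mem_spl_of_mem_PAS hQ y⟩
  have hPy : (1 - P) y ≠ 0 := fun h ↦
    hy ((sub_eq_zero.1 (by simpa using h)).symm ▸ apply_mem_of_mem_PAS hP y)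
  obtain ⟨φ, hφy, hφ⟩ := exists_dual_eq_one_vanishing_on_ker (1 - P) hPy
  have hn := sub_mem_ker_inf_of_mem_spl (sub_apply_mem_spl_of_mem_PAS hP y) hx
  rw [← ker_adjoint_comp_self] at hn
  have hQ := add_smulRight_mem_PAS (isSelfAdjoint_iff'.2 (by simp [adjoint_comp])) hP hn
    (φ := φ) fun s hs ↦ hφ s (by simp [apply_eq_self_of_mem_PAS hP hs])
  refine ⟨_, hQ, ?_⟩
  simp only [add_apply, smulRight_apply, hφy, one_smul]
  abel

end Projections

theorem stmt_13_general
    {H K : Type*}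
    [NormedAddCommGroup H] [InnerProductSpace ℂ H] [CompleteSpace H]
    [NormedAddCommGroup K] [InnerProductSpace ℂ K] [CompleteSpace K]
    (T : H →L[ℂ] K) (S : Submodule ℂ H)
    (A : H →L[ℂ] H) (hA : A = adjoint T ∘L T)
    -- `P₀` is the distinguished element `P_{A,S}` of `P(A,S)`, whose nullspace is
    -- `A⁻¹(S^⊥) ⊖ (N(A) ∩ S)`.
    (P₀ : H →L[ℂ] H) (hP₀ : P₀ ∈ PAS A S)
    (hP₀ker : LinearMap.ker (P₀ : H →ₗ[ℂ] H) =
      Submodule.comap (A : H →ₗ[ℂ] H) Sᗮ ⊓ (LinearMap.ker (A : H →ₗ[ℂ] H) ⊓ S)ᗮ)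
    (y : H) (hy : y ∉ S) :
    {x : H | (∃ s ∈ S, x = y + s) ∧ ∀ s ∈ S, ‖T x‖ ≤ ‖T (y + s)‖} =
      {x : H | ∃ Q ∈ PAS A S, x = y - Q y} ∧
    (∀ x ∈ {x : H | (∃ s ∈ S, x = y + s) ∧ ∀ s ∈ S, ‖T x‖ ≤ ‖T (y + s)‖},
      ‖y - P₀ y‖ ≤ ‖x‖) ∧
    (∀ x ∈ {x : H | (∃ s ∈ S, x = y + s) ∧ ∀ s ∈ S, ‖T x‖ ≤ ‖T (y + s)‖},
      ‖x‖ = ‖y - P₀ y‖ → x = y - P₀ y) := by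
  subst hA
  change spl T S y = _ ∧ (∀ x ∈ spl T S y, _) ∧ ∀ x ∈ spl T S y, _
  have hx₀ := sub_apply_mem_spl_of_mem_PAS hP₀ y
  have hker : y - P₀ y ∈ LinearMap.ker (P₀ : H →ₗ[ℂ] H) := by
    simp [apply_eq_self_of_mem_PAS hP₀ (apply_mem_of_mem_PAS hP₀ y)]
  rw [hP₀ker, ker_adjoint_comp_self] at hker
  exact ⟨spl_eq_setOf_PAS hP₀ hy, fun x ↦ norm_le_of_mem_spl hx₀ hker.2,
    fun x ↦ eq_of_mem_spl_of_norm_eq hx₀ hker.2⟩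

theorem stmt_13
    {H K : Type*}
    [NormedAddCommGroup H] [InnerProductSpace ℂ H] [CompleteSpace H]
    [NormedAddCommGroup K] [InnerProductSpace ℂ K] [CompleteSpace K]
    (T : H →L[ℂ] K) (S : Submodule ℂ H) (hS : IsClosed (S : Set H))
    (A : H →L[ℂ] H) (hA : A = adjoint T ∘L T)
    (hcompat : (PAS A S).Nonempty)
    -- `P₀` is the distinguished element `P_{A,S}` of `P(A,S)`, whose nullspace is
    -- `A⁻¹(S^⊥) ⊖ (N(A) ∩ S)`.
    (P₀ : H →L[ℂ] H) (hP₀ : P₀ ∈ PAS A S)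
    (hP₀ker : LinearMap.ker (P₀ : H →ₗ[ℂ] H) =
      Submodule.comap (A : H →ₗ[ℂ] H) Sᗮ ⊓ (LinearMap.ker (A : H →ₗ[ℂ] H) ⊓ S)ᗮ)
    (y : H) (hy : y ∉ S) :
    {x : H | (∃ s ∈ S, x = y + s) ∧ ∀ s ∈ S, ‖T x‖ ≤ ‖T (y + s)‖} =
      {x : H | ∃ Q ∈ PAS A S, x = y - Q y} ∧
    (∀ x ∈ {x : H | (∃ s ∈ S, x = y + s) ∧ ∀ s ∈ S, ‖T x‖ ≤ ‖T (y + s)‖},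
      ‖y - P₀ y‖ ≤ ‖x‖) ∧
    (∀ x ∈ {x : H | (∃ s ∈ S, x = y + s) ∧ ∀ s ∈ S, ‖T x‖ ≤ ‖T (y + s)‖},
      ‖x‖ = ‖y - P₀ y‖ → x = y - P₀ y) :=
  stmt_13_general T S A hA P₀ hP₀ hP₀ker y hy
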